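/- If a has period n₁ with DFT A supported on L₁ indices, and b has period n₂ with DFT B supported on L₂ indices, with gcd(n₁,n₂)=1, then the DFT of the product u_t = a_t b_t is supported on exactly L₁·L₂ indices of ZMod (n₁n₂), namely the CRT images of the product support. -/
import Mathlib

open scoped Classical

private lemma per_mod' {γ : Type*} (n : ℕ) (f : ℕ → γ)
    (hf : ∀ t, f (t + n) = f t) : ∀ t, f t = f (t % n) := by
  intro t
  conv_lhs => rw [← Nat.mod_add_div t n]
  generalize t % n = s
  generalize t / n = m
  induction m with
  | zero => simp
  | succ m ih => rw [Nat.mul_succ, ← Nat.add_assoc, hf, ih]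

private lemma pow_modEq' {F : Type*} [Monoid F] (α : F) (n : ℕ) (hα : orderOf α = n)
    {m m' : ℕ} (h : m ≡ m' [MOD n]) : α ^ m = α ^ m' := by
  rw [← pow_mod_orderOf, hα, show m % n = m' % n from h, ← hα, pow_mod_orderOf]

/-- If the DFT of a is supported on L₁ indices and the DFT of b on L₂ indices,
with coprime periods, then the DFT of the product sequence is supported on
exactly L₁·L₂ indices. -/
theorem stmt_13 (F : Type*) [Field F] [CharP F 2] (n₁ n₂ : ℕ)
    (h₁ : 0 < n₁) (h₂ : 0 < n₂) (hcop : Nat.Coprime n₁ n₂)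
    (α β : F) (hα : orderOf α = n₁) (hβ : orderOf β = n₂)
    (a b : ℕ → ZMod 2)
    (ha : ∀ t, a (t + n₁) = a t) (hb : ∀ t, b (t + n₂) = b t)
    (A B U : ℕ → F)
    (hA : ∀ k, A k = ∑ t ∈ Finset.range n₁, (ZMod.cast (a t) : F) * α ^ (t * k))
    (hB : ∀ k, B k = ∑ t ∈ Finset.range n₂, (ZMod.cast (b t) : F) * β ^ (t * k))
    (hU : ∀ k, U k = ∑ t ∈ Finset.range (n₁ * n₂),
        (ZMod.cast (a t * b t) : F) * (α * β) ^ (t * k)) :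
    ((Finset.range (n₁ * n₂)).filter fun k => U k ≠ 0).card
      = ((Finset.range n₁).filter fun k => A k ≠ 0).card *
        ((Finset.range n₂).filter fun k => B k ≠ 0).card := by
  have hn : 0 < n₁ * n₂ := Nat.mul_pos h₁ h₂
  have hcast : ∀ x y : ZMod 2, (ZMod.cast (x * y) : F) = ZMod.cast x * ZMod.cast y := by
    intro x y
    rw [← ZMod.castHom_apply (h := dvd_refl 2), map_mul, ZMod.castHom_apply,
      ZMod.castHom_apply]
  -- injectivity of CRT map
  have hinj : ∀ t₁ ∈ Finset.range (n₁ * n₂), ∀ t₂ ∈ Finset.range (n₁ * n₂),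
      (t₁ % n₁, t₁ % n₂) = (t₂ % n₁, t₂ % n₂) → t₁ = t₂ := by
    intro t₁ ht₁ t₂ ht₂ heq
    rw [Prod.mk.injEq] at heq
    have h12 : t₁ ≡ t₂ [MOD n₁ * n₂] :=
      (Nat.modEq_and_modEq_iff_modEq_mul hcop).mp ⟨heq.1, heq.2⟩
    rw [Finset.mem_range] at ht₁ ht₂
    have := h12
    unfold Nat.ModEq at this
    rwa [Nat.mod_eq_of_lt ht₁, Nat.mod_eq_of_lt ht₂] at this
  -- surjectivity of CRT map onto pairs
  have hsurj : ∀ p : ℕ × ℕ, p.1 < n₁ → p.2 < n₂ →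
      ∃ t < n₁ * n₂, t % n₁ = p.1 ∧ t % n₂ = p.2 := by
    intro p hp1 hp2
    obtain ⟨c, hc1, hc2⟩ := Nat.chineseRemainder hcop p.1 p.2
    refine ⟨c % (n₁ * n₂), Nat.mod_lt _ hn, ?_, ?_⟩
    · rw [Nat.mod_mod_of_dvd _ (dvd_mul_right n₁ n₂)]
      rw [show c % n₁ = p.1 % n₁ from hc1, Nat.mod_eq_of_lt hp1]
    · rw [Nat.mod_mod_of_dvd _ (dvd_mul_left n₂ n₁)]
      rw [show c % n₂ = p.2 % n₂ from hc2, Nat.mod_eq_of_lt hp2]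
  -- U k = A k * B k
  have hUAB : ∀ k, U k = A k * B k := by
    intro k
    rw [hU, hA, hB, Finset.sum_mul_sum, ← Finset.sum_product']
    refine Finset.sum_bij (fun t _ => (t % n₁, t % n₂)) ?_ hinj ?_ ?_
    · intro t ht
      exact Finset.mem_product.mpr ⟨Finset.mem_range.mpr (Nat.mod_lt _ h₁),
        Finset.mem_range.mpr (Nat.mod_lt _ h₂)⟩
    · intro p hp
      rw [Finset.mem_product, Finset.mem_range, Finset.mem_range] at hp
      obtain ⟨t, ht, h1, h2⟩ := hsurj p hp.1 hp.2
      exact ⟨t, Finset.mem_range.mpr ht, by simp [h1, h2]⟩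
    · intro t ht
      have e1 : α ^ (t * k) = α ^ (t % n₁ * k) :=
        pow_modEq' α n₁ hα ((Nat.mod_modEq t n₁).symm.mul_right k)
      have e2 : β ^ (t * k) = β ^ (t % n₂ * k) :=
        pow_modEq' β n₂ hβ ((Nat.mod_modEq t n₂).symm.mul_right k)
      rw [hcast, mul_pow, per_mod' n₁ a ha t, per_mod' n₂ b hb t, e1, e2]
      ring
  have hAper : ∀ k, A k = A (k % n₁) := by
    intro k
    rw [hA, hA]
    refine Finset.sum_congr rfl fun t _ => ?_
    rw [pow_modEq' α n₁ hα ((Nat.mod_modEq k n₁).symm.mul_left t)]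
  have hBper : ∀ k, B k = B (k % n₂) := by
    intro k
    rw [hB, hB]
    refine Finset.sum_congr rfl fun t _ => ?_
    rw [pow_modEq' β n₂ hβ ((Nat.mod_modEq k n₂).symm.mul_left t)]
  have key : ∀ k, U k ≠ 0 ↔ A (k % n₁) ≠ 0 ∧ B (k % n₂) ≠ 0 := by
    intro k
    rw [hUAB k, hAper k, hBper k, mul_ne_zero_iff]
  rw [← Finset.card_product]
  refine Finset.card_bij (fun k _ => (k % n₁, k % n₂)) ?_ ?_ ?_
  · intro k hk
    rw [Finset.mem_filter, Finset.mem_range, key] at hk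
    exact Finset.mem_product.mpr ⟨Finset.mem_filter.mpr
      ⟨Finset.mem_range.mpr (Nat.mod_lt _ h₁), hk.2.1⟩,
      Finset.mem_filter.mpr ⟨Finset.mem_range.mpr (Nat.mod_lt _ h₂), hk.2.2⟩⟩
  · intro t₁ ht₁ t₂ ht₂ heq
    exact hinj t₁ (Finset.mem_filter.mp ht₁).1 t₂ (Finset.mem_filter.mp ht₂).1 heq
  · intro p hp
    rw [Finset.mem_product, Finset.mem_filter, Finset.mem_filter,
      Finset.mem_range, Finset.mem_range] at hp
    obtain ⟨t, ht, h1, h2⟩ := hsurj p hp.1.1 hp.2.1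
    refine ⟨t, Finset.mem_filter.mpr ⟨Finset.mem_range.mpr ht, ?_⟩, by simp [h1, h2]⟩
    rw [key, h1, h2]
    exact ⟨hp.1.2, hp.2.2⟩
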